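/- arXiv:0905.4698 — 2 statements merged into one kernel-verified Lean document; each statement's English description precedes it below -/
import Mathlib

section
/- Fix n ≥ 1 and a ≥ 1, and let P_a be the n×n matrix defined below. Then the eigenvalues of P_a form the geometric series 1, 1/a, 1/a^2, …, 1/a^{n−1}: the characteristic polynomial of P_a equals ∏_{m=0}^{n−1} (X − a^{−m}). -/
/-- The transition matrix following a single card through a GSR `a`-shuffle of an `n`-card
deck: `P_a(i,j)` (with `1`-based positions `i.val+1`, `j.val+1`) is the chance that the card
at position `i` moves to position `j`. -/
def singleCardMatrix (n a : ℕ) : Matrix (Fin n) (Fin n) ℚ := fun i j =>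
  ((∑ k ∈ Finset.Icc 1 a,
      ∑ r ∈ Finset.Icc ((i.val + 1) + (j.val + 1) - (n + 1)) (min i.val j.val),
        Nat.choose j.val r * Nat.choose (n - (j.val + 1)) (i.val - r) * k ^ r *
          (a - k) ^ (j.val - r) * (k - 1) ^ (i.val - r) *
          (a - k + 1) ^ ((n - (j.val + 1)) - (i.val - r)) : ℕ) : ℚ) / (a : ℚ) ^ n

/-!
Let `W = (C(j, d))_{d, j}` be the upper Pascal matrix. Since `P_a(i, j)` is the coefficient of
`t^i` in `∑_k (k t + a - k)^j ((k - 1) t + a - k + 1)^(n-1-j)`, the entry `(W P_a)(d, j)` is the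
`d`-th coefficient of its Taylor shift `t ↦ t + 1`, that is of
`∑_k (k t + a)^j ((k - 1) t + a)^(n-1-j)`. Expanding, this is a polynomial in `j` of degree at most
`d` with leading coefficient `a^{-d} / d!`. Newton's forward-difference formula rewrites every such
row in the binomial basis `(C(j, e))_e`, so `W P_a = T W` with `T` lower triangular and
`T(d, d) = a^{-d}`; as `det W = 1`, `P_a` and `T` share their characteristic polynomial.
-/

open Finset Polynomial
open scoped Nat fwdDiff Matrix

section Similarity

def pascalMatrix (n : ℕ) (K : Type*) [CommRing K] : Matrix (Fin n) (Fin n) K :=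
  Matrix.of fun d j => (j.val.choose d.val : K)

variable {K : Type*} [CommRing K]

lemma det_pascalMatrix (n : ℕ) : (pascalMatrix n K).det = 1 := by
  rw [Matrix.det_of_isUpperTriangular fun i j hij => by
    simp [pascalMatrix, Nat.choose_eq_zero_of_lt (show j.val < i.val from hij)]]
  simp [pascalMatrix]

lemma charpoly_eq_of_mul_eq_mul {n : Type*} [Fintype n] [DecidableEq n] {W P T : Matrix n n K}
    (hW : IsUnit W.det) (h : W * P = T * W) : P.charpoly = T.charpoly := by
  have hP : P = W⁻¹ * (T * W) := by rw [← h, ← mul_assoc, Matrix.nonsing_inv_mul _ hW, one_mul]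
  rw [hP, Matrix.charpoly_mul_comm, mul_assoc, Matrix.mul_nonsing_inv _ hW, mul_one]

lemma fwdDiff_iter_comp_addMonoidHom {M M' G : Type*} [AddCommMonoid M] [AddCommMonoid M']
    [AddCommGroup G] (g : M →+ M') (f : M' → G) (h : M) (k : ℕ) :
    (Δ_[h])^[k] (f ∘ g) = ((Δ_[g h])^[k] f) ∘ g := by
  induction k with
  | zero => rfl
  | succ k ih =>
    rw [Function.iterate_succ_apply', Function.iterate_succ_apply', ih]
    ext y
    simp [fwdDiff, map_add]

lemma fwdDiff_iter_eval_natCast_zero (p : K[X]) {e : ℕ} (hp : p.natDegree ≤ e) :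
    (Δ_[1])^[e] (fun s : ℕ => p.eval (s : K)) 0 = e ! * p.coeff e := by
  have := congrFun (fwdDiff_iter_comp_addMonoidHom (Nat.castAddMonoidHom K) p.eval 1 e) 0
  simp only [Function.comp_def, Nat.coe_castAddMonoidHom, Nat.cast_one, Nat.cast_zero] at this
  rw [this]
  rcases hp.lt_or_eq with hlt | rfl
  · rw [fwdDiff_iter_eq_zero_of_degree_lt hlt, coeff_eq_zero_of_natDegree_lt hlt]
    simp
  · rw [fwdDiff_iter_degree_eq_factorial]
    simp only [Pi.smul_apply, Pi.natCast_apply, smul_eq_mul, mul_comm, leadingCoeff]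

lemma apply_eq_sum_fwdDiff_iter_mul_choose {n i : ℕ} (hi : i < n) (f : ℕ → K) :
    f i = ∑ e : Fin n, (Δ_[1])^[e] f 0 * (i.choose e : K) := by
  have := shift_eq_sum_fwdDiff_iter 1 f i 0
  simp only [smul_eq_mul, mul_one, zero_add, nsmul_eq_mul] at this
  rw [this, Fin.sum_univ_eq_sum_range (fun e => (Δ_[1])^[e] f 0 * (i.choose e : K))]
  refine (sum_congr rfl fun e _ => mul_comm _ _).trans (sum_subset ?_ fun e _ he => ?_)
  · intro e he
    simp only [mem_range] at he ⊢
    omega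
  · simp only [mem_range, not_lt] at he
    simp [Nat.choose_eq_zero_of_lt (show i < e by omega)]

theorem charpoly_eq_prod_of_pascalMatrix_mul {n : ℕ} (P : Matrix (Fin n) (Fin n) K)
    (R : ℕ → K[X]) (hdeg : ∀ d, (R d).natDegree ≤ d)
    (hrow : ∀ d i : Fin n, (pascalMatrix n K * P) d i = (R d).eval (i : K)) :
    P.charpoly = ∏ d : Fin n, (X - C ((d : ℕ)! * (R d).coeff d)) := by
  set T : Matrix (Fin n) (Fin n) K :=
    Matrix.of fun d e => (Δ_[1])^[e] (fun s : ℕ => (R d).eval (s : K)) 0 with hT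
  have hsim : pascalMatrix n K * P = T * pascalMatrix n K := by
    ext d i
    rw [hrow, Matrix.mul_apply,
      apply_eq_sum_fwdDiff_iter_mul_choose i.isLt (fun s : ℕ => (R d).eval (s : K))]
    rfl
  have hT_lower : Tᵀ.IsUpperTriangular := fun e d (hde : d < e) => by
    simp only [hT, Matrix.transpose_apply, Matrix.of_apply]
    rw [fwdDiff_iter_eval_natCast_zero _ ((hdeg d).trans hde.le),
      coeff_eq_zero_of_natDegree_lt ((hdeg d).trans_lt hde), mul_zero]
  rw [charpoly_eq_of_mul_eq_mul (by simp [det_pascalMatrix]) hsim, ← Matrix.charpoly_transpose,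
    Matrix.charpoly_of_isUpperTriangular _ hT_lower]
  simp [hT, fwdDiff_iter_eval_natCast_zero _ (hdeg _)]

end Similarity

lemma natDegree_C_sub_X {R : Type*} [Ring R] [Nontrivial R] (c : R) : (C c - X).natDegree = 1 := by
  rw [← neg_sub, natDegree_neg, natDegree_X_sub_C]

section ChoosePoly

variable (K : Type*) [Field K] [CharZero K]

noncomputable def choosePoly (e : ℕ) : K[X] := C (e ! : K)⁻¹ * descPochhammer K e

variable {K}

lemma choosePoly_eval_natCast (s e : ℕ) : (choosePoly K e).eval (s : K) = s.choose e := by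
  rw [choosePoly, eval_mul, eval_C, descPochhammer_eval_eq_descFactorial,
    Nat.descFactorial_eq_factorial_mul_choose, Nat.cast_mul,
    inv_mul_cancel_left₀ (Nat.cast_ne_zero.mpr e.factorial_ne_zero)]

lemma natDegree_choosePoly (e : ℕ) : (choosePoly K e).natDegree = e := by
  rw [choosePoly, natDegree_C_mul (inv_ne_zero (Nat.cast_ne_zero.mpr e.factorial_ne_zero)),
    descPochhammer_natDegree]

lemma leadingCoeff_choosePoly (e : ℕ) : (choosePoly K e).leadingCoeff = (e ! : K)⁻¹ := by
  rw [choosePoly, leadingCoeff_C_mul_of_isUnit, (monic_descPochhammer K e).leadingCoeff, mul_one]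
  exact (inv_ne_zero (Nat.cast_ne_zero.mpr e.factorial_ne_zero)).isUnit

lemma choosePoly_comp_C_sub_X_eval_natCast {N s : ℕ} (hs : s ≤ N) (e : ℕ) :
    ((choosePoly K e).comp (C (N : K) - X)).eval (s : K) = (N - s).choose e := by
  rw [eval_comp, eval_sub, eval_C, eval_X, ← Nat.cast_sub hs, choosePoly_eval_natCast]

lemma natDegree_choosePoly_comp_C_sub_X (c : K) (e : ℕ) :
    ((choosePoly K e).comp (C c - X)).natDegree = e := by
  rw [natDegree_comp, natDegree_C_sub_X, natDegree_choosePoly, mul_one]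

lemma leadingCoeff_choosePoly_comp_C_sub_X (c : K) (e : ℕ) :
    ((choosePoly K e).comp (C c - X)).leadingCoeff = (-1) ^ e * (e ! : K)⁻¹ := by
  rw [leadingCoeff_comp (by rw [natDegree_C_sub_X]; exact one_ne_zero), leadingCoeff_choosePoly,
    natDegree_choosePoly, ← neg_sub, leadingCoeff_neg, (monic_X_sub_C c).leadingCoeff, mul_comm]

lemma coeff_choosePoly_self (e : ℕ) : (choosePoly K e).coeff e = (e ! : K)⁻¹ := by
  have h := leadingCoeff_choosePoly (K := K) e
  rwa [leadingCoeff, natDegree_choosePoly] at h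

lemma coeff_choosePoly_mul_choosePoly_comp_C_sub_X (c : K) {r d : ℕ} (hr : r ≤ d) :
    (choosePoly K r * (choosePoly K (d - r)).comp (C c - X)).coeff d =
      (r ! : K)⁻¹ * ((-1) ^ (d - r) * ((d - r)! : K)⁻¹) := by
  have h := coeff_mul_add_eq_of_natDegree_le (natDegree_choosePoly (K := K) r).le
    (natDegree_choosePoly_comp_C_sub_X c (d - r)).le
  have hlead := leadingCoeff_choosePoly_comp_C_sub_X c (d - r)
  rw [leadingCoeff, natDegree_choosePoly_comp_C_sub_X] at hlead
  rwa [Nat.add_sub_cancel' hr, coeff_choosePoly_self, hlead] at h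

lemma add_pow_div_factorial (x y : K) (d : ℕ) :
    (x + y) ^ d / d ! = ∑ r ∈ range (d + 1), x ^ r / r ! * (y ^ (d - r) / (d - r)!) := by
  rw [add_pow, sum_div]
  refine sum_congr rfl fun r hr => ?_
  have hrd : r ≤ d := Nat.lt_succ_iff.mp (mem_range.mp hr)
  have hfac : (d.choose r : K) * r ! * (d - r)! = d ! := by
    exact_mod_cast Nat.choose_mul_factorial_mul_factorial hrd
  have h1 : (r ! : K) ≠ 0 := Nat.cast_ne_zero.mpr r.factorial_ne_zero
  have h2 : ((d - r)! : K) ≠ 0 := Nat.cast_ne_zero.mpr (d - r).factorial_ne_zero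
  have h0 : (d.choose r : K) ≠ 0 := Nat.cast_ne_zero.mpr (Nat.choose_pos hrd).ne'
  rw [← hfac]
  field_simp

end ChoosePoly

section LinearPowers

variable {R : Type*} [CommSemiring R]

lemma coeff_C_mul_X_add_C_pow (α β : R) (m r : ℕ) :
    ((C α * X + C β) ^ m).coeff r = m.choose r * α ^ r * β ^ (m - r) := by
  have hterm : ∀ x, (C α * X) ^ x * C β ^ (m - x) * (m.choose x : R[X]) =
      C (m.choose x * α ^ x * β ^ (m - x)) * X ^ x := fun x => by
    simp only [mul_pow, ← C_pow, ← C_eq_natCast, C_mul]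
    ring
  simp_rw [add_pow, hterm, finsetSum_coeff, coeff_C_mul_X_pow, sum_ite_eq, mem_range]
  split_ifs with h
  · rfl
  · simp [Nat.choose_eq_zero_of_lt (show m < r by omega)]

lemma coeff_linear_pow_mul_linear_pow (α β γ δ : R) (m l i : ℕ) :
    ((C α * X + C β) ^ m * (C γ * X + C δ) ^ l).coeff i =
      ∑ r ∈ range (i + 1), m.choose r * l.choose (i - r) * α ^ r * β ^ (m - r) * γ ^ (i - r) *
        δ ^ (l - (i - r)) := by
  rw [coeff_mul, Nat.sum_antidiagonal_eq_sum_range_succ_mk]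
  refine sum_congr rfl fun r _ => ?_
  rw [coeff_C_mul_X_add_C_pow, coeff_C_mul_X_add_C_pow]
  ring

lemma coeff_linear_pow_mul_linear_pow_of_same_const (α γ β : R) {m l d : ℕ} (hd : d ≤ m + l) :
    ((C α * X + C β) ^ m * (C γ * X + C β) ^ l).coeff d =
      β ^ (m + l - d) *
        ∑ r ∈ range (d + 1), m.choose r * l.choose (d - r) * α ^ r * γ ^ (d - r) := by
  rw [coeff_linear_pow_mul_linear_pow, mul_sum]
  refine sum_congr rfl fun r hr => ?_
  have := mem_range.mp hr
  rcases le_or_gt r m with hrm | hrm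
  · rcases le_or_gt (d - r) l with hrl | hrl
    · rw [show m + l - d = (m - r) + (l - (d - r)) by omega, pow_add]
      ring
    · simp [Nat.choose_eq_zero_of_lt hrl]
  · simp [Nat.choose_eq_zero_of_lt hrm]

lemma taylor_C_mul_X_add_C (r α β : R) : taylor r (C α * X + C β) = C α * X + C (α * r + β) := by
  simp only [taylor_apply, add_comp, mul_comp, C_comp, X_comp, C_add, C_mul]
  ring

lemma sum_range_choose_mul_coeff {f : R[X]} {n : ℕ} (hf : f.natDegree < n) (d : ℕ) :
    ∑ i ∈ range n, (i.choose d : R) * f.coeff i = (taylor 1 f).coeff d := by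
  conv_rhs => rw [f.as_sum_range' n hf]
  simp [finsetSum_coeff, taylor_monomial, coeff_X_add_one_pow, mul_comm]

end LinearPowers

section SingleCard

noncomputable def singleCardGF (n a k j : ℕ) : ℕ[X] :=
  (C k * X + C (a - k)) ^ j * (C (k - 1) * X + C (a - k + 1)) ^ (n - (j + 1))

lemma singleCardMatrix_apply (n a : ℕ) (i j : Fin n) :
    singleCardMatrix n a i j =
      ((∑ k ∈ Icc 1 a, (singleCardGF n a k j).coeff i : ℕ) : ℚ) / a ^ n := by
  unfold singleCardMatrix
  refine congrArg (fun s : ℕ => (s : ℚ) / (a : ℚ) ^ n) (sum_congr rfl fun k _ => ?_)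
  rw [singleCardGF, coeff_linear_pow_mul_linear_pow]
  refine sum_subset (fun r hr => ?_) fun r hr hr' => ?_
  · simp only [mem_Icc, mem_range] at hr ⊢
    omega
  · simp only [mem_Icc, mem_range, not_and_or, not_le] at hr hr'
    rcases hr' with hlo | hhi
    · simp [Nat.choose_eq_zero_of_lt (show n - (j + 1) < i - r by omega)]
    · simp [Nat.choose_eq_zero_of_lt (show j.val < r by omega)]

lemma natDegree_singleCardGF_lt {n j : ℕ} (hj : j < n) (a k : ℕ) :
    (singleCardGF n a k j).natDegree < n := by
  have hlin : ∀ α β : ℕ, (C α * X + C β).natDegree ≤ 1 := fun α β => by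
    compute_degree
  refine (natDegree_mul_le.trans (add_le_add (natDegree_pow_le_of_le _ (hlin _ _))
    (natDegree_pow_le_of_le _ (hlin _ _)))).trans_lt ?_
  omega

lemma taylor_one_singleCardGF {n a k : ℕ} (hk : k ∈ Icc 1 a) (j : ℕ) :
    taylor 1 (singleCardGF n a k j) =
      (C k * X + C a) ^ j * (C (k - 1) * X + C a) ^ (n - (j + 1)) := by
  rw [mem_Icc] at hk
  rw [singleCardGF, taylor_mul, taylor_pow, taylor_pow, taylor_C_mul_X_add_C, taylor_C_mul_X_add_C,
    mul_one, mul_one, show k + (a - k) = a by omega, show k - 1 + (a - k + 1) = a by omega]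

lemma sum_choose_mul_coeff_singleCardGF {n a k : ℕ} (hk : k ∈ Icc 1 a) {j d : ℕ} (hj : j < n)
    (hd : d < n) :
    ∑ i ∈ range n, i.choose d * (singleCardGF n a k j).coeff i =
      a ^ (n - 1 - d) * ∑ r ∈ range (d + 1),
        j.choose r * (n - 1 - j).choose (d - r) * k ^ r * (k - 1) ^ (d - r) := by
  have htaylor := sum_range_choose_mul_coeff (natDegree_singleCardGF_lt hj a k) d
  simp only [Nat.cast_id] at htaylor
  rw [htaylor, taylor_one_singleCardGF hk,
    coeff_linear_pow_mul_linear_pow_of_same_const _ _ _ (by omega),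
    show j + (n - (j + 1)) - d = n - 1 - d by omega, show n - (j + 1) = n - 1 - j by omega]
  simp only [Nat.cast_id]

noncomputable def rowPoly (a N d : ℕ) : ℚ[X] :=
  C ((a : ℚ) ^ (d + 1))⁻¹ * ∑ k ∈ Icc 1 a, ∑ r ∈ range (d + 1),
    C ((k : ℚ) ^ r * ((k : ℚ) - 1) ^ (d - r)) *
      (choosePoly ℚ r * (choosePoly ℚ (d - r)).comp (C (N : ℚ) - X))

lemma rowPoly_eval_natCast {a N d j : ℕ} (hj : j ≤ N) :
    (rowPoly a N d).eval (j : ℚ) = ((a : ℚ) ^ (d + 1))⁻¹ * ∑ k ∈ Icc 1 a, ∑ r ∈ range (d + 1),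
      (k : ℚ) ^ r * ((k : ℚ) - 1) ^ (d - r) * j.choose r * (N - j).choose (d - r) := by
  simp only [rowPoly, eval_mul, eval_C, eval_finsetSum, choosePoly_eval_natCast,
    choosePoly_comp_C_sub_X_eval_natCast hj, mul_assoc]

lemma natDegree_rowPoly_le (a N d : ℕ) : (rowPoly a N d).natDegree ≤ d := by
  refine (natDegree_C_mul_le _ _).trans <| natDegree_sum_le_of_forall_le _ _ fun k _ =>
    natDegree_sum_le_of_forall_le _ _ fun r hr => (natDegree_C_mul_le _ _).trans ?_
  refine natDegree_mul_le.trans ?_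
  rw [natDegree_choosePoly, natDegree_choosePoly_comp_C_sub_X]
  have := mem_range.mp hr
  omega

lemma factorial_mul_coeff_rowPoly {a : ℕ} (ha : a ≠ 0) (N d : ℕ) :
    d ! * (rowPoly a N d).coeff d = ((a : ℚ) ^ d)⁻¹ := by
  have hinner : ∀ k : ℕ, ∑ r ∈ range (d + 1), (k : ℚ) ^ r * ((k : ℚ) - 1) ^ (d - r) *
      ((r ! : ℚ)⁻¹ * ((-1) ^ (d - r) * ((d - r)! : ℚ)⁻¹)) = (d ! : ℚ)⁻¹ := fun k => by
    have h := add_pow_div_factorial (k : ℚ) (1 - k) d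
    rw [add_sub_cancel, one_pow, one_div] at h
    rw [h]
    refine sum_congr rfl fun r _ => ?_
    rw [show (1 - (k : ℚ)) = -1 * (k - 1) by ring, mul_pow]
    ring
  simp only [rowPoly, coeff_C_mul, finsetSum_coeff]
  rw [sum_congr rfl fun k _ => (sum_congr rfl fun r hr => by
    rw [coeff_choosePoly_mul_choosePoly_comp_C_sub_X _
      (Nat.lt_succ_iff.mp (mem_range.mp hr))]).trans (hinner k)]
  rw [sum_const, Nat.card_Icc, Nat.add_sub_cancel, nsmul_eq_mul]
  have ha' : (a : ℚ) ≠ 0 := Nat.cast_ne_zero.mpr ha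
  have hd : (d ! : ℚ) ≠ 0 := Nat.cast_ne_zero.mpr d.factorial_ne_zero
  field_simp
  ring

lemma pascalMatrix_mul_singleCardMatrix_apply {n a : ℕ} (ha : a ≠ 0) (d j : Fin n) :
    (pascalMatrix n ℚ * singleCardMatrix n a) d j = (rowPoly a (n - 1) d).eval (j : ℚ) := by
  have hrow : ∑ i : Fin n, (i.val.choose d : ℚ) * singleCardMatrix n a i j =
      ((∑ k ∈ Icc 1 a, ∑ i ∈ range n, i.choose d * (singleCardGF n a k j).coeff i : ℕ) : ℚ) /
        a ^ n := by
    simp only [singleCardMatrix_apply, mul_div_assoc', ← sum_div]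
    push_cast
    simp_rw [mul_sum]
    rw [Fin.sum_univ_eq_sum_range (fun i => ∑ k ∈ Icc 1 a,
      (i.choose d : ℚ) * ((singleCardGF n a k j).coeff i : ℚ)), sum_comm]
  rw [Matrix.mul_apply]
  simp only [pascalMatrix, Matrix.of_apply]
  rw [hrow, sum_congr rfl fun k hk => sum_choose_mul_coeff_singleCardGF hk j.isLt d.isLt,
    rowPoly_eval_natCast (by omega)]
  have hpow : (a : ℚ) ^ n = (a : ℚ) ^ (n - 1 - d.val) * (a : ℚ) ^ (d.val + 1) := by
    rw [← pow_add]
    congr 1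
    omega
  have ha' : (a : ℚ) ≠ 0 := Nat.cast_ne_zero.mpr ha
  rw [Nat.cast_sum, sum_div, mul_sum]
  refine sum_congr rfl fun k hk => ?_
  push_cast [Nat.cast_sub (mem_Icc.mp hk).1]
  rw [hpow, mul_sum, mul_sum, sum_div]
  refine sum_congr rfl fun r _ => ?_
  field_simp

end SingleCard

open Polynomial in
theorem singleCardMatrix_charpoly_general (n a : ℕ) (ha : 1 ≤ a) :
    (singleCardMatrix n a).charpoly
      = ∏ m ∈ Finset.range n, (X - C (1 / (a : ℚ) ^ m)) := by
  have ha0 : a ≠ 0 := by omega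
  rw [charpoly_eq_prod_of_pascalMatrix_mul _ (rowPoly a (n - 1)) (natDegree_rowPoly_le a (n - 1))
    (pascalMatrix_mul_singleCardMatrix_apply ha0), ← Fin.prod_univ_eq_prod_range]
  simp only [factorial_mul_coeff_rowPoly ha0, one_div]

open Polynomial in
/-- The eigenvalues of the single-card transition matrix form the geometric series
`1, 1/a, …, 1/a^{n-1}`: its characteristic polynomial is `∏_{m=0}^{n-1} (X - a^{-m})`. -/
theorem singleCardMatrix_charpoly (n a : ℕ) (hn : 1 ≤ n) (ha : 1 ≤ a) :
    (singleCardMatrix n a).charpoly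
      = ∏ m ∈ Finset.range n, (X - C (1 / (a : ℚ) ^ m)) :=
  singleCardMatrix_charpoly_general n a ha
end

section
/- Fix n ≥ 1 and let v : {1,…,2n} → {1,2} be the deck with n cards labelled 1 on top of n cards labelled 2. Then the total variation distance from uniform after a single GSR 2-shuffle, namely (1/2) ∑_w |Q_2^v(w) − 1/C(2n,n)| with the sum over all decks w having exactly n entries equal to 1 and n equal to 2, equals (1/2)·[ ((2^{n+1} − 1)/2^{2n} − 1/C(2n,n)) + ∑_{i=0}^{n−1} ∑_{j=0}^{n−1} |(2^i + 2^j − 1)/2^{2n} − 1/C(2n,n)| · C(2n − (i+j+2), n − (i+1)) ]. -/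
/-!
A stable sort by `f` lists the positions in the lexicographic order of `(f q, q)`, so
`w ∘ σ_f` is the sorted deck exactly when `w` has no inversion along that order. If the first `1`
of `w` sits at position `t` and its last `0` at position `ℓ`, this happens iff `f` agrees with `w`
on `[t, N)` or on `[0, ℓ]`; the two families of cuts meet only in `w`, which gives
`2^t + 2^(N-1-ℓ) - 1` cuts. Apart from the sorted deck (where `t = ℓ + 1 = n`), the decks with
`n` zeros are grouped by the lengths `i, j < n` of their initial run of zeros and final run of
ones: such a deck is `0^i 1 u 0 1^j`, determined by its middle part `u`, which holds `n - i - 1`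
zeros among `2n - i - j - 2` cards.
-/

/-- `σ` is the stable-sort permutation of `f`: `f ∘ σ` is weakly increasing and `σ` is
increasing on each level set of `f ∘ σ`. -/
def IsStableSort {n a : ℕ} (f : Fin n → Fin a) (σ : Equiv.Perm (Fin n)) : Prop :=
  Monotone (f ∘ σ) ∧ ∀ i j : Fin n, i < j → f (σ i) = f (σ j) → σ i < σ j

open Finset

def MonotoneAlong {N a : ℕ} {β : Type*} [Preorder β] (f : Fin N → Fin a) (w : Fin N → β) :
    Prop :=
  ∀ q q', toLex (f q, q) < toLex (f q', q') → w q ≤ w q'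

def sortedDeck (N k : ℕ) : Fin N → Fin 2 := fun p => if (p : ℕ) < k then 0 else 1

section StableSort

variable {N a : ℕ} {f : Fin N → Fin a} {σ : Equiv.Perm (Fin N)}

theorem IsStableSort.strictMono_toLex (h : IsStableSort f σ) :
    StrictMono fun p => toLex (f (σ p), σ p) := fun i j hij =>
  Prod.Lex.toLex_lt_toLex.2 <| (h.1 hij.le).lt_or_eq.imp id fun he => ⟨he, h.2 i j hij he⟩

theorem IsStableSort.monotone_comp_iff {β : Type*} [Preorder β] (h : IsStableSort f σ)
    (w : Fin N → β) : Monotone (w ∘ σ) ↔ MonotoneAlong f w := by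
  refine ⟨fun hw q q' hlt => ?_,
    fun hw => monotone_iff_forall_lt.2 fun i j hij => hw _ _ (h.strictMono_toLex hij)⟩
  have key := h.strictMono_toLex.lt_iff_lt (a := σ.symm q) (b := σ.symm q')
  simpa using hw.imp (key.1 (by simpa using hlt)).le

end StableSort

theorem monotone_iff_eq_sortedDeck {N k : ℕ} {g : Fin N → Fin 2} (hg : #{p | g p = 0} = k) :
    Monotone g ↔ g = sortedDeck N k := by
  constructor
  · intro hmono
    have hlower : ∀ p q, q ≤ p → g p = 0 → g q = 0 := fun p q hqp hp =>
      nonpos_iff_eq_zero.1 (hp ▸ hmono hqp)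
    funext p
    have := Fin.lt_card_filter_univ_iff_apply_of_imp (j := p) _ hlower
    rw [hg] at this
    unfold sortedDeck
    split_ifs with hp <;> omega
  · rintro rfl p q hpq
    unfold sortedDeck
    split_ifs <;> omega

section Runs

variable {N : ℕ} (w : Fin N → Fin 2)

-- Both sets contain every index `≥ N`, so the all-zero deck has `N` leading zeros and the all-one
-- deck `N` trailing ones.
noncomputable def leadingZeros : ℕ := sInf {i | ∀ p : Fin N, (p : ℕ) = i → w p = 1}

noncomputable def trailingOnes : ℕ := sInf {j | ∀ p : Fin N, (p : ℕ) + j + 1 = N → w p = 0}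

variable {w}

theorem leadingZeros_le : leadingZeros w ≤ N :=
  Nat.sInf_le fun p hp => absurd p.2 (by omega)

theorem apply_eq_zero_of_lt_leadingZeros {p : Fin N} (hp : (p : ℕ) < leadingZeros w) :
    w p = 0 := by
  have := Nat.notMem_of_lt_sInf hp
  simp only [Set.mem_ofPred_eq, not_forall] at this
  obtain ⟨q, hq, hq1⟩ := this
  obtain rfl : q = p := Fin.ext hq
  omega

theorem apply_eq_one_of_eq_leadingZeros {p : Fin N} (hp : (p : ℕ) = leadingZeros w) :
    w p = 1 :=
  Nat.sInf_mem (s := {i | ∀ p : Fin N, (p : ℕ) = i → w p = 1})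
    ⟨N, fun q hq => absurd q.2 (by omega)⟩ p hp

theorem leadingZeros_eq_iff {i : ℕ} (hi : i ≤ N) : leadingZeros w = i ↔
    (∀ p : Fin N, (p : ℕ) < i → w p = 0) ∧ ∀ p : Fin N, (p : ℕ) = i → w p = 1 := by
  refine ⟨fun h => ⟨fun p hp => apply_eq_zero_of_lt_leadingZeros (h ▸ hp),
    fun p hp => apply_eq_one_of_eq_leadingZeros (h ▸ hp)⟩, fun ⟨hlt, heq⟩ => ?_⟩
  refine le_antisymm (Nat.sInf_le heq) (not_lt.1 fun hlz => ?_)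
  have h1 := apply_eq_one_of_eq_leadingZeros (w := w) (p := ⟨leadingZeros w, by omega⟩) rfl
  rw [hlt _ hlz] at h1
  exact zero_ne_one h1

theorem trailingOnes_le : trailingOnes w ≤ N :=
  Nat.sInf_le fun p hp => absurd p.2 (by omega)

theorem apply_eq_one_of_le_add_trailingOnes {p : Fin N} (hp : N ≤ p + trailingOnes w) :
    w p = 1 := by
  have := Nat.notMem_of_lt_sInf (show N - 1 - p < trailingOnes w by omega)
  simp only [Set.mem_ofPred_eq, not_forall] at this
  obtain ⟨q, hq, hq1⟩ := this
  obtain rfl : q = p := Fin.ext (by omega)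
  omega

theorem apply_eq_zero_of_add_trailingOnes_eq {p : Fin N} (hp : p + trailingOnes w + 1 = N) :
    w p = 0 :=
  Nat.sInf_mem (s := {j | ∀ p : Fin N, (p : ℕ) + j + 1 = N → w p = 0})
    ⟨N, fun q hq => absurd q.2 (by omega)⟩ p hp

theorem trailingOnes_eq_iff {j : ℕ} (hj : j ≤ N) :
    trailingOnes w = j ↔
      (∀ p : Fin N, N ≤ p + j → w p = 1) ∧
        ∀ p : Fin N, (p : ℕ) + j + 1 = N → w p = 0 := by
  refine ⟨fun h => ⟨fun p hp => apply_eq_one_of_le_add_trailingOnes (h ▸ hp),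
    fun p hp => apply_eq_zero_of_add_trailingOnes_eq (h ▸ hp)⟩, fun ⟨hle, heq⟩ => ?_⟩
  refine le_antisymm (Nat.sInf_le heq) (not_lt.1 fun hto => ?_)
  let p : Fin N := ⟨N - 1 - trailingOnes w, by omega⟩
  have h0 := apply_eq_zero_of_add_trailingOnes_eq (w := w) (p := p) (by simp only [p]; omega)
  rw [hle p (by simp only [p]; omega)] at h0
  exact one_ne_zero h0

theorem leadingZeros_add_trailingOnes_le : leadingZeros w + trailingOnes w ≤ N := by
  by_contra! h
  have := leadingZeros_le (w := w)
  have := trailingOnes_le (w := w)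
  let p : Fin N := ⟨N - trailingOnes w, by omega⟩
  have h0 := apply_eq_zero_of_lt_leadingZeros (w := w) (p := p) (by simp only [p]; omega)
  rw [apply_eq_one_of_le_add_trailingOnes (w := w) (p := p) (by simp only [p]; omega)] at h0
  exact one_ne_zero h0

end Runs

section Counts

variable {N : ℕ} {w : Fin N → Fin 2}

theorem card_filter_eq_one (w : Fin N → Fin 2) :
    #{p | w p = 1} = N - #{p | w p = 0} := by
  have := card_filter_add_card_filter_not (s := univ) fun p => w p = 0
  have hones : #{p | w p = 1} = #{p | ¬w p = 0} := congrArg card <| filter_congr fun p _ => by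
    omega
  rw [card_univ, Fintype.card_fin] at this
  omega

theorem card_filter_le_val {m : ℕ} (hm : m ≤ N) : #{p : Fin N | m ≤ (p : ℕ)} = N - m := by
  have := card_filter_add_card_filter_not (s := univ) fun p : Fin N => (p : ℕ) < m
  simp only [not_lt, Fin.card_filter_val_lt, card_univ, Fintype.card_fin] at this
  omega

theorem leadingZeros_le_card : leadingZeros w ≤ #{p | w p = 0} := by
  calc leadingZeros w = #{p : Fin N | (p : ℕ) < leadingZeros w} := by
        rw [Fin.card_filter_val_lt, min_eq_right leadingZeros_le]
    _ ≤ #{p | w p = 0} := card_le_card fun p => by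
        simpa using apply_eq_zero_of_lt_leadingZeros (w := w) (p := p)

theorem leadingZeros_eq_iff_eq_sortedDeck {k : ℕ} (hw : #{p | w p = 0} = k) :
    leadingZeros w = k ↔ w = sortedDeck N k := by
  have hkN : k ≤ N := hw ▸ (card_le_univ _).trans_eq (Fintype.card_fin N)
  constructor
  · intro h
    have hsub : ({p | (p : ℕ) < k} : Finset (Fin N)) ⊆ ({p | w p = 0} : Finset (Fin N)) :=
      fun p => by simpa [← h] using apply_eq_zero_of_lt_leadingZeros
    have hzeros := eq_of_subset_of_card_le hsub
      (by rw [hw, Fin.card_filter_val_lt, min_eq_right hkN])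
    funext p
    have hp := congrArg (p ∈ ·) hzeros
    simp only [mem_filter, mem_univ, true_and, eq_iff_iff] at hp
    unfold sortedDeck
    split_ifs <;> omega
  · rintro rfl
    rw [leadingZeros_eq_iff hkN]
    constructor <;> intro p hp <;> simp [sortedDeck, hp]

theorem trailingOnes_le_card : trailingOnes w ≤ #{p | w p = 1} := by
  calc trailingOnes w = #{p : Fin N | N - trailingOnes w ≤ (p : ℕ)} := by
        rw [card_filter_le_val (Nat.sub_le _ _), Nat.sub_sub_self trailingOnes_le]
    _ ≤ #{p | w p = 1} := card_le_card fun p => by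
        simpa using fun hp => apply_eq_one_of_le_add_trailingOnes (w := w) (p := p) (by omega)

theorem trailingOnes_eq_iff_eq_sortedDeck {m : ℕ} (hw : #{p | w p = 1} = m) :
    trailingOnes w = m ↔ w = sortedDeck N (N - m) := by
  have hmN : m ≤ N := hw ▸ (card_le_univ _).trans_eq (Fintype.card_fin N)
  constructor
  · intro h
    have hsub : ({p | N - m ≤ (p : ℕ)} : Finset (Fin N)) ⊆ ({p | w p = 1} : Finset (Fin N)) :=
      fun p => by simpa using fun hp => apply_eq_one_of_le_add_trailingOnes (by omega)
    have hones := eq_of_subset_of_card_le hsub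
      (by rw [hw, card_filter_le_val (Nat.sub_le _ _)]; omega)
    funext p
    have hp := congrArg (p ∈ ·) hones
    simp only [mem_filter, mem_univ, true_and, eq_iff_iff] at hp
    unfold sortedDeck
    split_ifs <;> omega
  · rintro rfl
    rw [trailingOnes_eq_iff hmN]
    constructor <;> intro p hp <;> simp only [sortedDeck] <;> split_ifs <;> omega

theorem leadingZeros_lt_of_ne_sortedDeck {k : ℕ} (hw : #{p | w p = 0} = k)
    (hne : w ≠ sortedDeck N k) : leadingZeros w < k :=
  (hw ▸ leadingZeros_le_card).lt_of_ne ((leadingZeros_eq_iff_eq_sortedDeck hw).not.2 hne)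

theorem trailingOnes_lt_of_ne_sortedDeck {k : ℕ} (hkN : k ≤ N) (hw : #{p | w p = 0} = k)
    (hne : w ≠ sortedDeck N k) : trailingOnes w < N - k := by
  have hw_ones : #{p | w p = 1} = N - k := by rw [card_filter_eq_one, hw]
  refine (hw_ones ▸ trailingOnes_le_card).lt_of_ne fun h => hne ?_
  rw [(trailingOnes_eq_iff_eq_sortedDeck hw_ones).1 h, Nat.sub_sub_self hkN]

end Counts

section Agreement

variable {α β : Type*} [Fintype α] [DecidableEq α] [Fintype β] [DecidableEq β]

theorem card_filter_eqOn (w : α → β) (P : Finset α) :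
    #{f : α → β | ∀ p ∈ P, f p = w p} = Fintype.card β ^ #Pᶜ := by
  have : ({f | ∀ p ∈ P, f p = w p} : Finset (α → β)) =
      Fintype.piFinset fun p => if p ∈ P then {w p} else univ := by
    ext f
    simp only [mem_filter, mem_univ, true_and, Fintype.mem_piFinset]
    refine ⟨fun h p => ?_, fun h p hp => by simpa [hp] using h p⟩
    split_ifs with hp
    · simp [h p hp]
    · exact mem_univ _
  rw [this, Fintype.card_piFinset]
  simp only [apply_ite Finset.card, card_singleton, card_univ]
  rw [prod_ite, prod_const_one, prod_const, one_mul, filter_not, filter_mem_eq_inter,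
    univ_inter, compl_eq_univ_sdiff]

theorem card_filter_eqOn_or_eqOn (w : α → β) {P Q : Finset α} (hPQ : P ∪ Q = univ) :
    #{f : α → β | (∀ p ∈ P, f p = w p) ∨ ∀ p ∈ Q, f p = w p} =
      Fintype.card β ^ #Pᶜ + Fintype.card β ^ #Qᶜ - 1 := by
  have hinter : ({f : α → β | ∀ p ∈ P, f p = w p} : Finset (α → β)) ∩
      ({f : α → β | ∀ p ∈ Q, f p = w p} : Finset (α → β)) = {w} := by
    ext f
    simp only [mem_inter, mem_filter, mem_univ, true_and, mem_singleton]
    refine ⟨fun ⟨hP, hQ⟩ => funext fun p => ?_, by rintro rfl; simp⟩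
    rcases mem_union.1 (hPQ ▸ mem_univ p) with hp | hp
    exacts [hP p hp, hQ p hp]
  rw [filter_or, card_union, hinter, card_singleton, card_filter_eqOn, card_filter_eqOn]

theorem card_filter_eq_zero_of_eqOn {w w₀ : α → Fin 2} {P : Finset α}
    (hw : ∀ p ∈ P, w p = w₀ p) :
    #{p | w p = 0} = #{p ∈ P | w₀ p = 0} + #{p ∈ Pᶜ | w p = 0} := by
  have hP : {p ∈ P | w p = 0} = {p ∈ P | w₀ p = 0} := filter_congr fun p hp => by rw [hw p hp]
  rw [← hP, ← card_union_of_disjoint (disjoint_filter_filter disjoint_compl_right),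
    ← filter_union, union_compl]

theorem card_filter_eqOn_card_zeros (w₀ : α → Fin 2) (P : Finset α) {k : ℕ}
    (hk : #{p ∈ P | w₀ p = 0} ≤ k) :
    #{w : α → Fin 2 | (∀ p ∈ P, w p = w₀ p) ∧ #{p | w p = 0} = k} =
      (#Pᶜ).choose (k - #{p ∈ P | w₀ p = 0}) := by
  let extend : Finset α → α → Fin 2 := fun M p =>
    if p ∈ P then w₀ p else if p ∈ M then 0 else 1
  have extend_eqOn : ∀ M, ∀ p ∈ P, extend M p = w₀ p := fun M p hp => if_pos hp
  have zeros_extend : ∀ M ⊆ Pᶜ, {p ∈ Pᶜ | extend M p = 0} = M := fun M hM => by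
    ext p
    by_cases hp : p ∈ P
    · simpa [hp] using fun hpM => mem_compl.1 (hM hpM) hp
    · by_cases hpM : p ∈ M <;> simp [extend, hp, hpM]
  rw [← card_powersetCard]
  refine card_nbij' (fun w => {p ∈ Pᶜ | w p = 0}) extend ?_ ?_ ?_ ?_
  · intro w hw
    simp only [mem_coe, mem_filter, mem_univ, true_and, mem_powersetCard] at hw ⊢
    refine ⟨filter_subset _ _, ?_⟩
    have := card_filter_eq_zero_of_eqOn hw.1
    omega
  · intro M hM
    simp only [mem_coe, mem_filter, mem_univ, true_and, mem_powersetCard] at hM ⊢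
    refine ⟨extend_eqOn M, ?_⟩
    rw [card_filter_eq_zero_of_eqOn (extend_eqOn M), zeros_extend M hM.1]
    omega
  · intro w hw
    simp only [mem_coe, mem_filter, mem_univ, true_and] at hw
    funext p
    by_cases hp : p ∈ P
    · simp [extend, hp, hw.1 p hp]
    · simp only [extend, hp, if_false, mem_filter, mem_compl, not_false_eq_true, true_and]
      split_ifs <;> omega
  · intro M hM
    simp only [mem_coe, mem_powersetCard] at hM
    exact zeros_extend M hM.1

end Agreement

section Inversions

variable {N : ℕ} {f w : Fin N → Fin 2} {t ℓ : Fin N}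

theorem monotoneAlong_of_eqOn_Ici (hbelow : ∀ p < t, w p = 0)
    (hagree : ∀ p ∈ Ici t, f p = w p) : MonotoneAlong f w := by
  intro q q' hlt
  simp only [Prod.Lex.toLex_lt_toLex, mem_Ici] at hlt hagree
  by_contra hc
  have hq : w q = 1 := by omega
  have hq' : w q' = 0 := by omega
  have htq : t ≤ q := not_lt.1 fun hqt => by simp [hbelow q hqt] at hq
  have := hagree q htq
  by_cases htq' : t ≤ q'
  · have := hagree q' htq'
    omega
  · omega

theorem monotoneAlong_of_eqOn_Iic (habove : ∀ p, ℓ < p → w p = 1)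
    (hagree : ∀ p ∈ Iic ℓ, f p = w p) : MonotoneAlong f w := by
  intro q q' hlt
  simp only [Prod.Lex.toLex_lt_toLex, mem_Iic] at hlt hagree
  by_contra hc
  have hq : w q = 1 := by omega
  have hq' : w q' = 0 := by omega
  have hq'ℓ : q' ≤ ℓ := not_lt.1 fun hℓq' => by simp [habove q' hℓq'] at hq'
  have := hagree q' hq'ℓ
  by_cases hqℓ : q ≤ ℓ
  · have := hagree q hqℓ
    omega
  · omega

theorem MonotoneAlong.eqOn_Ici_or_eqOn_Iic (hmono : MonotoneAlong f w) (ht : w t = 1)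
    (hbelow : ∀ p < t, w p = 0) (hℓ : w ℓ = 0) (habove : ∀ p, ℓ < p → w p = 1) :
    (∀ p ∈ Ici t, f p = w p) ∨ ∀ p ∈ Iic ℓ, f p = w p := by
  simp only [mem_Ici, mem_Iic]
  have inversion : ∀ q q', w q = 1 → w q' = 0 → f q' < f q ∨ f q' = f q ∧ q' < q := by
    intro q q' hq hq'
    have hne : q ≠ q' := by rintro rfl; simp [hq] at hq'
    by_contra hc
    have := hmono q q' (Prod.Lex.toLex_lt_toLex.2 (by dsimp only; omega))
    omega
  have middle : ∀ p, t ≤ p → p ≤ ℓ → f p = w p := by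
    intro p htp hpℓ
    by_cases hp : w p = 0
    · have := inversion t p ht hp
      have : t ≠ p := by rintro rfl; simp [ht] at hp
      omega
    · have := inversion p ℓ (by omega) hℓ
      have : p ≠ ℓ := by rintro rfl; simp [hℓ] at hp
      omega
  by_cases hlow : ∀ p < t, f p = 0
  · refine Or.inr fun p hpℓ => ?_
    by_cases hpt : p < t
    · rw [hlow p hpt, hbelow p hpt]
    · exact middle p (not_lt.1 hpt) hpℓ
  · push Not at hlow
    obtain ⟨p₀, hp₀t, hfp₀⟩ := hlow
    refine Or.inl fun p htp => ?_
    by_cases hpℓ : p ≤ ℓ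
    · exact middle p htp hpℓ
    · have := inversion p p₀ (habove p (not_le.1 hpℓ)) (hbelow p₀ hp₀t)
      rw [habove p (not_le.1 hpℓ)]
      omega

theorem monotoneAlong_iff (ht : w t = 1) (hbelow : ∀ p < t, w p = 0) (hℓ : w ℓ = 0)
    (habove : ∀ p, ℓ < p → w p = 1) :
    MonotoneAlong f w ↔ (∀ p ∈ Ici t, f p = w p) ∨ ∀ p ∈ Iic ℓ, f p = w p :=
  ⟨fun h => h.eqOn_Ici_or_eqOn_Iic ht hbelow hℓ habove, fun h =>
    h.elim (monotoneAlong_of_eqOn_Ici hbelow) (monotoneAlong_of_eqOn_Iic habove)⟩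

end Inversions

theorem IsStableSort.comp_eq_sortedDeck_iff {N k : ℕ} {f w : Fin N → Fin 2}
    {σ : Equiv.Perm (Fin N)} (h : IsStableSort f σ) (hw : #{p | w p = 0} = k) {t ℓ : Fin N}
    (ht : w t = 1) (hbelow : ∀ p < t, w p = 0) (hℓ : w ℓ = 0)
    (habove : ∀ p, ℓ < p → w p = 1) :
    w ∘ σ = sortedDeck N k ↔
      (∀ p ∈ Ici t, f p = w p) ∨ ∀ p ∈ Iic ℓ, f p = w p := by
  have hzeros : #{p | (w ∘ σ) p = 0} = k := hw ▸ card_equiv σ (by simp)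
  rw [← monotone_iff_eq_sortedDeck hzeros, h.monotone_comp_iff,
    monotoneAlong_iff ht hbelow hℓ habove]

theorem card_filter_comp_stableSort_eq_sortedDeck {N k : ℕ} (hk : 0 < k) (hkN : k < N)
    (σ : (Fin N → Fin 2) → Equiv.Perm (Fin N)) (hσ : ∀ f, IsStableSort f (σ f))
    {w : Fin N → Fin 2} (hw : #{p | w p = 0} = k) :
    #{f | w ∘ σ f = sortedDeck N k} = 2 ^ leadingZeros w + 2 ^ trailingOnes w - 1 := by
  have hlz : leadingZeros w < N := leadingZeros_le_card.trans_lt (hw ▸ hkN)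
  have hto : trailingOnes w < N :=
    trailingOnes_le_card.trans_lt (by rw [card_filter_eq_one, hw]; omega)
  have hsum := leadingZeros_add_trailingOnes_le (w := w)
  let t : Fin N := ⟨leadingZeros w, hlz⟩
  let ℓ : Fin N := ⟨N - 1 - trailingOnes w, by omega⟩
  have hsorted : ∀ f, w ∘ σ f = sortedDeck N k ↔
      (∀ p ∈ Ici t, f p = w p) ∨ ∀ p ∈ Iic ℓ, f p = w p := fun f =>
    (hσ f).comp_eq_sortedDeck_iff hw (apply_eq_one_of_eq_leadingZeros rfl)
      (fun p hp => apply_eq_zero_of_lt_leadingZeros hp)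
      (apply_eq_zero_of_add_trailingOnes_eq (by simp only [ℓ]; omega))
      (fun p hp => apply_eq_one_of_le_add_trailingOnes <| by
        simp only [ℓ, Fin.lt_def] at hp
        omega)
  have hcover : Ici t ∪ Iic ℓ = univ := eq_univ_of_forall fun p => by
    simp only [mem_union, mem_Ici, mem_Iic, Fin.le_def, t, ℓ]
    omega
  have hIci : #(Ici t)ᶜ = leadingZeros w := by
    rw [show (Ici t)ᶜ = Iio t by ext; simp, Fin.card_Iio]
  have hIic : #(Iic ℓ)ᶜ = trailingOnes w := by
    rw [show (Iic ℓ)ᶜ = Ioi ℓ by ext; simp, Fin.card_Ioi]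
    simp only [ℓ]
    omega
  rw [filter_congr fun f _ => hsorted f]
  have h := card_filter_eqOn_or_eqOn w hcover
  rw [hIci, hIic, Fintype.card_fin] at h
  -- the two filters differ only in their `Decidable` instances
  convert h using 3

theorem card_filter_leadingZeros_trailingOnes {N k i j : ℕ} (hi : i < k) (hj : j < N - k) :
    #{w : Fin N → Fin 2 | #{p | w p = 0} = k ∧ leadingZeros w = i ∧ trailingOnes w = j} =
      (N - (i + j + 2)).choose (k - (i + 1)) := by
  let a : Fin N := ⟨i, by omega⟩
  let b : Fin N := ⟨N - 1 - j, by omega⟩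
  have hab : a < b := by simp only [Fin.lt_def, a, b]; omega
  let w₀ : Fin N → Fin 2 := fun p => if p < a ∨ p = b then 0 else 1
  let frame : Finset (Fin N) := Iic a ∪ Ici b
  have hframe : ∀ w : Fin N → Fin 2,
      leadingZeros w = i ∧ trailingOnes w = j ↔ ∀ p ∈ frame, w p = w₀ p := by
    intro w
    rw [leadingZeros_eq_iff (by omega), trailingOnes_eq_iff (by omega)]
    simp only [frame, w₀, mem_union, mem_Iic, mem_Ici, a, b, Fin.le_def, Fin.lt_def, Fin.ext_iff]
    constructor
    · rintro ⟨⟨hlt, heq⟩, hge, hb⟩ p hp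
      split_ifs with h
      · exact h.elim (hlt p) fun h => hb p (by omega)
      · rcases hp with hp | hp
        · exact heq p (by omega)
        · exact hge p (by omega)
    · intro h
      refine ⟨⟨fun p hp => ?_, fun p hp => ?_⟩, fun p hp => ?_, fun p hp => ?_⟩ <;>
        rw [h p (by omega)] <;> split_ifs <;> first | rfl | omega
  have hcompl : #frameᶜ = N - (i + j + 2) := by
    rw [show frameᶜ = Ioo a b by ext; simp [frame], Fin.card_Ioo]
    simp only [a, b]
    omega
  have hzeros : #{p ∈ frame | w₀ p = 0} = i + 1 := by
    rw [show {p ∈ frame | w₀ p = 0} = insert b (Iio a) by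
        ext p; simp only [frame, w₀, mem_filter, mem_union, mem_Iic, mem_Ici, mem_insert, mem_Iio]
        split_ifs <;> simp <;> omega,
      card_insert_of_notMem (by simpa using hab.le), Fin.card_Iio]
  have h := card_filter_eqOn_card_zeros w₀ frame (k := k) (by omega)
  rw [hzeros, hcompl] at h
  rw [← h]
  congr 1
  ext w
  simp only [mem_filter, mem_univ, true_and, ← hframe]
  tauto

theorem card_filter_sortedDeck_eq_zero (N k : ℕ) (hkN : k ≤ N) :
    #{p | sortedDeck N k p = 0} = k := by
  simp only [sortedDeck, ite_eq_left_iff, one_ne_zero, imp_false, not_not,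
    Fin.card_filter_val_lt, min_eq_right hkN]

theorem sum_filter_card_zeros_eq {M : Type*} [AddCommMonoid M] {N k : ℕ}
    (hkN : k ≤ N) (F : ℕ → ℕ → M) :
    ∑ w : Fin N → Fin 2 with #{p | w p = 0} = k, F (leadingZeros w) (trailingOnes w) =
      F k (N - k) + ∑ i ∈ range k, ∑ j ∈ range (N - k),
        (N - (i + j + 2)).choose (k - (i + 1)) • F i j := by
  have hv := card_filter_sortedDeck_eq_zero N k hkN
  have hv_ones : #{p | sortedDeck N k p = 1} = N - k := by rw [card_filter_eq_one, hv]
  have hlz_v := (leadingZeros_eq_iff_eq_sortedDeck hv).2 rfl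
  have hto_v := (trailingOnes_eq_iff_eq_sortedDeck hv_ones).2 (by rw [Nat.sub_sub_self hkN])
  set S : Finset (Fin N → Fin 2) := {w | #{p | w p = 0} = k}
  rw [← add_sum_erase S _ (mem_filter.2 ⟨mem_univ _, hv⟩), hlz_v, hto_v]
  congr 1
  have hmaps : ∀ w ∈ S.erase (sortedDeck N k),
      (leadingZeros w, trailingOnes w) ∈ range k ×ˢ range (N - k) := by
    intro w hw
    obtain ⟨hne, hw⟩ := mem_erase.1 hw
    have hw : #{p | w p = 0} = k := (mem_filter.1 hw).2
    exact mem_product.2 ⟨mem_range.2 (leadingZeros_lt_of_ne_sortedDeck hw hne),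
      mem_range.2 (trailingOnes_lt_of_ne_sortedDeck hkN hw hne)⟩
  rw [← sum_fiberwise_of_maps_to hmaps, sum_product]
  refine sum_congr rfl fun i hi => sum_congr rfl fun j hj => ?_
  rw [mem_range] at hi hj
  have hF : ∀ w ∈ {w ∈ S.erase (sortedDeck N k) | (leadingZeros w, trailingOnes w) = (i, j)},
      F (leadingZeros w) (trailingOnes w) = F i j := fun w hw => by
    obtain ⟨hlz, hto⟩ := Prod.mk.inj (mem_filter.1 hw).2
    rw [hlz, hto]
  rw [sum_congr rfl hF, sum_const, ← card_filter_leadingZeros_trailingOnes hi hj]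
  congr 2
  ext w
  simp only [S, mem_filter, mem_erase, mem_univ, true_and, Prod.ext_iff]
  constructor
  · exact fun ⟨⟨_, hw⟩, hij⟩ => ⟨hw, hij⟩
  · rintro ⟨hw, hlz, hto⟩
    refine ⟨⟨?_, hw⟩, hlz, hto⟩
    rintro rfl
    omega

theorem one_div_choose_le (n : ℕ) :
    (1 : ℚ) / (2 * n).choose n ≤ (2 ^ (n + 1) - 1) / 2 ^ (2 * n) := by
  have hC : (0 : ℚ) < (2 * n).choose n := by exact_mod_cast Nat.choose_pos (by omega)
  have hlin : 2 * n + 1 ≤ 2 ^ (n + 1) - 1 := by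
    have := Nat.lt_two_pow_self (n := n)
    rw [pow_succ]
    omega
  have hnat : 4 ^ n ≤ (2 ^ (n + 1) - 1) * (2 * n).choose n :=
    (Nat.four_pow_le_two_mul_add_one_mul_central_binom n).trans (Nat.mul_le_mul_right _ hlin)
  have hrat : ((4 ^ n : ℕ) : ℚ) ≤ ((2 ^ (n + 1) - 1 : ℕ) : ℚ) * (2 * n).choose n := by
    exact_mod_cast hnat
  push_cast [Nat.one_le_two_pow] at hrat
  rw [div_le_div_iff₀ hC (by positivity), one_mul, pow_mul]
  norm_num
  exact hrat

/-- The total variation distance from uniform after a single GSR `2`-shuffle of a deck of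
`n` red cards atop `n` black cards equals
`(1/2)·[((2^{n+1}-1)/2^{2n} - 1/C(2n,n)) + ∑_{i=0}^{n-1} ∑_{j=0}^{n-1}
  |(2^i+2^j-1)/2^{2n} - 1/C(2n,n)|·C(2n-(i+j+2), n-(i+1))]`. -/
theorem two_shuffle_red_black_total_variation (n : ℕ) (hn : 1 ≤ n)
    (σ : (Fin (2 * n) → Fin 2) → Equiv.Perm (Fin (2 * n)))
    (hσ : ∀ f, IsStableSort f (σ f))
    (v : Fin (2 * n) → Fin 2) (hv : ∀ p : Fin (2 * n), v p = if (p : ℕ) < n then 0 else 1) :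
    ((1 : ℚ) / 2) * ∑ w ∈ Finset.univ.filter (fun w : Fin (2 * n) → Fin 2 =>
        (Finset.univ.filter fun p => w p = 0).card = n ∧
        (Finset.univ.filter fun p => w p = 1).card = n),
      |((Finset.univ.filter fun f : Fin (2 * n) → Fin 2 => w ∘ σ f = v).card : ℚ)
          / 2 ^ (2 * n) - 1 / (Nat.choose (2 * n) n : ℚ)|
    = ((1 : ℚ) / 2) *
        ((((2 ^ (n + 1) - 1 : ℚ)) / 2 ^ (2 * n) - 1 / (Nat.choose (2 * n) n : ℚ))
          + ∑ i ∈ Finset.range n, ∑ j ∈ Finset.range n,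
              |((2 ^ i + 2 ^ j - 1 : ℚ)) / 2 ^ (2 * n) - 1 / (Nat.choose (2 * n) n : ℚ)|
                * (Nat.choose (2 * n - (i + j + 2)) (n - (i + 1)) : ℚ)) := by
  obtain rfl : v = sortedDeck (2 * n) n := funext hv
  let F : ℕ → ℕ → ℚ := fun i j =>
    |(2 ^ i + 2 ^ j - 1) / 2 ^ (2 * n) - 1 / (2 * n).choose n|
  have hdecks : ∀ w : Fin (2 * n) → Fin 2,
      #{p | w p = 0} = n ∧ #{p | w p = 1} = n ↔ #{p | w p = 0} = n := fun w => by
    rw [card_filter_eq_one]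
    omega
  have hsummand : ∀ w ∈ ({w | #{p | w p = 0} = n} : Finset (Fin (2 * n) → Fin 2)),
      |(#{f | w ∘ σ f = sortedDeck (2 * n) n} : ℚ) / 2 ^ (2 * n) - 1 / (2 * n).choose n| =
        F (leadingZeros w) (trailingOnes w) := fun w hw => by
    rw [card_filter_comp_stableSort_eq_sortedDeck hn (by omega) σ hσ (mem_filter.1 hw).2,
      Nat.cast_sub (Nat.one_le_two_pow.trans (Nat.le_add_right _ _))]
    push_cast
    rfl
  rw [filter_congr fun w _ => hdecks w, sum_congr rfl hsummand,
    sum_filter_card_zeros_eq (by omega) F, show 2 * n - n = n by omega]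
  simp only [F, nsmul_eq_mul']
  rw [← two_mul, ← pow_succ', abs_of_nonneg (sub_nonneg.2 (one_div_choose_le n))]
end
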